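/- arXiv:2102.11369 — 2 statements merged into one kernel-verified Lean document; each statement's English description precedes it below -/
import Mathlib

section
/- If a convex quadrilateral Q is both tangential (admits an inscribed circle tangent to all four sides) and a midpoint diagonal quadrilateral, then Q is a kite: two pairs of adjacent sides of Q are equal; in particular the diagonals of Q are perpendicular. -/
open EuclideanGeometry

noncomputable section

abbrev Pt := EuclideanSpace ℝ (Fin 2)

/-- Convex quadrilateral with vertices in cyclic order: no three consecutive
vertices collinear and the diagonals cross. -/
def ConvexQuad (A₁ A₂ A₃ A₄ : Pt) : Prop :=
  AffineIndependent ℝ ![A₁, A₂, A₃] ∧ AffineIndependent ℝ ![A₂, A₃, A₄] ∧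
  AffineIndependent ℝ ![A₃, A₄, A₁] ∧ AffineIndependent ℝ ![A₄, A₁, A₂] ∧
  ∃ P : Pt, P ∈ openSegment ℝ A₁ A₃ ∧ P ∈ openSegment ℝ A₂ A₄

/-- Tangential quadrilateral: there is a circle inside the quadrilateral which
touches each of the four sides (in exactly one point). -/
def IsTangential (A₁ A₂ A₃ A₄ : Pt) : Prop :=
  ∃ (c : Pt) (ρ : ℝ), 0 < ρ ∧
    Metric.sphere c ρ ⊆ convexHull ℝ {A₁, A₂, A₃, A₄} ∧
    (∃! p : Pt, p ∈ Metric.sphere c ρ ∩ segment ℝ A₁ A₂) ∧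
    (∃! p : Pt, p ∈ Metric.sphere c ρ ∩ segment ℝ A₂ A₃) ∧
    (∃! p : Pt, p ∈ Metric.sphere c ρ ∩ segment ℝ A₃ A₄) ∧
    (∃! p : Pt, p ∈ Metric.sphere c ρ ∩ segment ℝ A₄ A₁)

/-- Midpoint diagonal quadrilateral. -/
def IsMidpointDiagonalQuad (A₁ A₂ A₃ A₄ : Pt) : Prop :=
  ∃ P : Pt, P ∈ openSegment ℝ A₁ A₃ ∧ P ∈ openSegment ℝ A₂ A₄ ∧
    (P = midpoint ℝ A₁ A₃ ∨ P = midpoint ℝ A₂ A₄)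

/-!
Where the incircle (centre `c`, radius `ρ`) touches a side, the radius is perpendicular to that
side, because the circle lies in the half-plane bounded by the side that contains the
quadrilateral. Hence both tangent segments from a vertex `X` have length `√(|Xc|² - ρ²)`, and the
sides satisfy the Pitot relation `|A₁A₂| + |A₃A₄| = |A₂A₃| + |A₄A₁|`.

If, after relabelling, the diagonal `AC` passes through the midpoint `P` of `BD`, write
`A = P - s u`, `C = P + t u`, `B = P - v`, `D = P + v` with `s, t > 0`. The Pitot relation becomes
`‖s u - v‖ + ‖t u - v‖ = ‖s u + v‖ + ‖t u + v‖`, and if `⟪u, v⟫ ≠ 0` each term on one side is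
strictly smaller than its counterpart on the other. So `AC ⊥ BD`, the line `AC` is the
perpendicular bisector of `BD`, and the quadrilateral is a kite.
-/

open RealInnerProductSpace Metric

section InnerProductSpace

variable {E : Type*} [NormedAddCommGroup E] [InnerProductSpace ℝ E]

lemma norm_smul_center_sub_eq_of_sphere_subset_halfSpace {g c p : E} {ρ : ℝ} (hg : g ≠ 0)
    (hS : sphere c ρ ⊆ {x | ⟪g, p⟫ ≤ ⟪g, x⟫}) (hp : p ∈ sphere c ρ) :
    ‖g‖ • (c - p) = ρ • g := by
  have hg' : 0 < ‖g‖ := norm_pos_iff.mpr hg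
  have hcp : ‖c - p‖ = ρ := by rw [← dist_eq_norm, dist_comm]; exact hp
  have hρ : 0 ≤ ρ := hcp ▸ norm_nonneg _
  -- The point of the sphere farthest in the direction `-g` still lies in the half-space,
  -- which forces equality in Cauchy–Schwarz for `g` and `c - p`.
  have hq : c - (ρ / ‖g‖) • g ∈ sphere c ρ := by
    rw [Metric.mem_sphere, dist_eq_norm, sub_sub_cancel_left, norm_neg, norm_smul,
      Real.norm_eq_abs, abs_of_nonneg (by positivity), div_mul_cancel₀ _ hg'.ne']
  have hle : ‖g‖ * ‖c - p‖ ≤ ⟪g, c - p⟫ := by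
    have h := hS hq
    have hρg : ρ / ‖g‖ * ‖g‖ ^ 2 = ρ * ‖g‖ := by field_simp
    rw [Set.mem_ofPred_eq, inner_sub_right, real_inner_smul_right, real_inner_self_eq_norm_sq,
      hρg] at h
    rw [inner_sub_right, hcp]
    linarith
  have h := inner_eq_norm_mul_iff_real.mp (le_antisymm (real_inner_le_norm _ _) hle)
  rwa [hcp, eq_comm] at h

lemma exists_inner_eq_zero_and_pos_of_not_collinear {A B C : E}
    (h : ¬ Collinear ℝ ({A, B, C} : Set E)) : ∃ g : E, ⟪g, B - A⟫ = 0 ∧ 0 < ⟪g, C - A⟫ := by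
  set K := ℝ ∙ (B - A)
  have hC : C - A ∉ K := by
    rintro hCK
    obtain ⟨r, hr⟩ := Submodule.mem_span_singleton.mp hCK
    refine h ?_
    have hmem : C ∈ line[ℝ, A, B] := by
      simpa [hr] using smul_vsub_vadd_mem_affineSpan_pair r A B
    have := collinear_insert_of_mem_affineSpan_pair hmem
    rwa [Set.insert_comm, Set.pair_comm] at this
  set g := C - A - K.starProjection (C - A)
  have hgK : g ∈ Kᗮ := K.sub_starProjection_mem_orthogonal _
  have hg : g ≠ 0 := fun h0 ↦ hC (K.starProjection_eq_self_iff.mp (sub_eq_zero.mp h0).symm)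
  refine ⟨g, K.inner_left_of_mem_orthogonal (Submodule.mem_span_singleton_self _) hgK, ?_⟩
  have hgC : ⟪g, C - A⟫ = ‖g‖ ^ 2 := by
    conv_lhs => rw [← sub_add_cancel (C - A) (K.starProjection (C - A))]
    rw [inner_add_right, K.inner_left_of_mem_orthogonal (K.starProjection_apply_mem _) hgK,
      add_zero]
    exact real_inner_self_eq_norm_sq g
  rw [hgC]
  positivity

lemma exists_convexHull_subset_halfSpace {A B C D P : E}
    (hABC : ¬ Collinear ℝ ({A, B, C} : Set E)) (hAC : P ∈ openSegment ℝ A C)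
    (hBD : P ∈ openSegment ℝ B D) :
    ∃ g : E, g ≠ 0 ∧ ⟪g, B - A⟫ = 0 ∧ convexHull ℝ {A, B, C, D} ⊆ {x | ⟪g, A⟫ ≤ ⟪g, x⟫} := by
  obtain ⟨g, hB, hC⟩ := exists_inner_eq_zero_and_pos_of_not_collinear hABC
  rw [inner_sub_right, sub_eq_zero] at hB
  rw [inner_sub_right, sub_pos] at hC
  refine ⟨g, fun h ↦ by simp [h] at hC, by rw [inner_sub_right, hB, sub_self], ?_⟩
  obtain ⟨s, ⟨hs, -⟩, rfl⟩ := openSegment_eq_image' ℝ A C ▸ hAC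
  obtain ⟨t, ⟨ht, -⟩, hP⟩ := openSegment_eq_image' ℝ B D ▸ hBD
  have hPg := congrArg (⟪g, ·⟫) hP
  simp only [inner_add_right, real_inner_smul_right, inner_sub_right] at hPg
  have hD : ⟪g, A⟫ ≤ ⟪g, D⟫ := by nlinarith
  refine convexHull_min ?_ (convex_halfSpace_ge (innerₛₗ ℝ g).isLinear _)
  simp only [Set.insert_subset_iff, Set.singleton_subset_iff, Set.mem_ofPred_eq]
  exact ⟨le_rfl, hB.ge, hC.le, hD⟩

lemma inner_sub_center_eq_zero_of_mem_segment {A B C D P c p : E} {ρ : ℝ}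
    (hABC : ¬ Collinear ℝ ({A, B, C} : Set E)) (hAC : P ∈ openSegment ℝ A C)
    (hBD : P ∈ openSegment ℝ B D) (hsub : sphere c ρ ⊆ convexHull ℝ {A, B, C, D})
    (hp : p ∈ sphere c ρ) (hpAB : p ∈ segment ℝ A B) : ⟪B - A, p - c⟫ = 0 := by
  obtain ⟨g, hg, hgAB, hhull⟩ := exists_convexHull_subset_halfSpace hABC hAC hBD
  have hgp : ⟪g, p⟫ = ⟪g, A⟫ := by
    obtain ⟨θ, -, rfl⟩ := segment_eq_image' ℝ A B ▸ hpAB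
    simp only [inner_add_right, real_inner_smul_right, hgAB, mul_zero, add_zero]
  have hcp := norm_smul_center_sub_eq_of_sphere_subset_halfSpace hg
    (hgp ▸ hsub.trans hhull) hp
  have := congrArg (⟪B - A, ·⟫) hcp
  simp only [real_inner_smul_right, real_inner_comm g, hgAB, mul_zero] at this
  rw [← neg_sub c p, inner_neg_right,
    (mul_eq_zero.mp this).resolve_left (norm_ne_zero_iff.mpr hg), neg_zero]

def tangentLength (c : E) (ρ : ℝ) (X : E) : ℝ := √(dist X c ^ 2 - ρ ^ 2)

lemma dist_eq_tangentLength_of_inner_eq_zero {c p X : E} {ρ : ℝ} (hp : p ∈ sphere c ρ)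
    (hX : ⟪X - p, p - c⟫ = 0) : dist X p = tangentLength c ρ X := by
  have hpyth : dist X c ^ 2 = dist X p ^ 2 + ρ ^ 2 := by
    have h := norm_add_sq_eq_norm_sq_add_norm_sq_real hX
    rwa [sub_add_sub_cancel, ← dist_eq_norm, ← dist_eq_norm, ← dist_eq_norm,
      Metric.mem_sphere.mp hp, ← sq, ← sq, ← sq] at h
  rw [tangentLength, hpyth, add_sub_cancel_right, Real.sqrt_sq dist_nonneg]

lemma dist_eq_tangentLength_add_of_not_collinear {A B C D P c : E} {ρ : ℝ}
    (hABC : ¬ Collinear ℝ ({A, B, C} : Set E)) (hAC : P ∈ openSegment ℝ A C)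
    (hBD : P ∈ openSegment ℝ B D) (hsub : sphere c ρ ⊆ convexHull ℝ {A, B, C, D})
    (htouch : ∃ p, p ∈ sphere c ρ ∩ segment ℝ A B) :
    dist A B = tangentLength c ρ A + tangentLength c ρ B := by
  obtain ⟨p, hp, hpAB⟩ := htouch
  have hperp := inner_sub_center_eq_zero_of_mem_segment hABC hAC hBD hsub hp hpAB
  rw [← dist_add_dist_of_mem_segment hpAB, dist_comm p B]
  obtain ⟨θ, -, rfl⟩ := segment_eq_image' ℝ A B ▸ hpAB
  congr 1 <;> refine dist_eq_tangentLength_of_inner_eq_zero hp ?_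
  · rw [show A - (A + θ • (B - A)) = (-θ) • (B - A) by module, real_inner_smul_left, hperp,
      mul_zero]
  · rw [show B - (A + θ • (B - A)) = (1 - θ) • (B - A) by module, real_inner_smul_left, hperp,
      mul_zero]

lemma norm_sub_lt_norm_add_of_inner_pos {x y : E} (h : 0 < ⟪x, y⟫) : ‖x - y‖ < ‖x + y‖ := by
  refine lt_of_pow_lt_pow_left₀ 2 (norm_nonneg _) ?_
  rw [norm_sub_sq_real, norm_add_sq_real]
  linarith

lemma inner_eq_zero_of_norm_sub_add_norm_sub_eq {u v : E} {s t : ℝ} (hs : 0 < s) (ht : 0 < t)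
    (h : ‖s • u - v‖ + ‖t • u - v‖ = ‖s • u + v‖ + ‖t • u + v‖) : ⟪u, v⟫ = 0 := by
  rcases lt_trichotomy ⟪u, v⟫ 0 with hneg | hzero | hpos
  · have key : ∀ r : ℝ, 0 < r → ‖r • u + v‖ < ‖r • u - v‖ := fun r hr ↦ by
      have h := norm_sub_lt_norm_add_of_inner_pos (x := r • u) (y := -v) (by
        rw [inner_neg_right, real_inner_smul_left]; nlinarith)
      rwa [sub_neg_eq_add, ← sub_eq_add_neg] at h
    linarith [key s hs, key t ht]
  · exact hzero
  · have key : ∀ r : ℝ, 0 < r → ‖r • u - v‖ < ‖r • u + v‖ := fun r hr ↦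
      norm_sub_lt_norm_add_of_inner_pos (by rw [real_inner_smul_left]; positivity)
    linarith [key s hs, key t ht]

lemma inner_eq_zero_of_pitot_of_midpoint {A B C D P : E} (hAC : P ∈ openSegment ℝ A C)
    (hmid : P = midpoint ℝ B D) (hpitot : dist A B + dist C D = dist B C + dist D A) :
    ⟪C - A, D - B⟫ = 0 := by
  obtain ⟨s, ⟨hs, hs1⟩, hP⟩ := openSegment_eq_image' ℝ A C ▸ hAC
  beta_reduce at hP
  set u := C - A with hu
  set v := D - P with hv
  have hA : A = P - s • u := by rw [← hP]; abel
  have hC : C = P + (1 - s) • u := by rw [← hP, hu]; module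
  have hB : B = P - v := by rw [hv, hmid, midpoint_eq_smul_add, invOf_eq_inv]; module
  have hD : D = P + v := by rw [hv]; abel
  have hAB : dist A B = ‖s • u - v‖ := by
    rw [dist_eq_norm, hA, hB, ← norm_neg]; congr 1; abel
  have hCD : dist C D = ‖(1 - s) • u - v‖ := by
    rw [dist_eq_norm, hC, hD]; congr 1; abel
  have hBC : dist B C = ‖(1 - s) • u + v‖ := by
    rw [dist_eq_norm, hB, hC, ← norm_neg]; congr 1; abel
  have hDA : dist D A = ‖s • u + v‖ := by
    rw [dist_eq_norm, hD, hA]; congr 1; abel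
  have huv := inner_eq_zero_of_norm_sub_add_norm_sub_eq hs (sub_pos.mpr hs1) (u := u) (v := v)
    (by linarith)
  rw [hD, hB, show P + v - (P - v) = (2 : ℝ) • v by module, real_inner_smul_right, huv, mul_zero]

lemma dist_eq_dist_of_inner_eq_zero_of_midpoint {A B C D P : E} (hAC : P ∈ segment ℝ A C)
    (hmid : P = midpoint ℝ B D) (hperp : ⟪C - A, D - B⟫ = 0) :
    dist A B = dist A D ∧ dist C B = dist C D := by
  obtain ⟨s, -, hP⟩ := segment_eq_image' ℝ A C ▸ hAC
  beta_reduce at hP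
  have hbis : ∀ r : ℝ, A + r • (C - A) ∈ AffineSubspace.perpBisector B D := fun r ↦ by
    rw [AffineSubspace.mem_perpBisector_iff_inner_eq_zero, ← hmid, ← hP, vsub_eq_sub,
      vsub_eq_sub,
      show A + r • (C - A) - (A + s • (C - A)) = (r - s) • (C - A) by module,
      real_inner_smul_left, hperp, mul_zero]
  refine ⟨?_, ?_⟩ <;> rw [← AffineSubspace.mem_perpBisector_iff_dist_eq]
  · simpa using hbis 0
  · simpa using hbis 1

end InnerProductSpace

lemma ConvexQuad.rotate {A₁ A₂ A₃ A₄ : Pt} (h : ConvexQuad A₁ A₂ A₃ A₄) :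
    ConvexQuad A₂ A₃ A₄ A₁ := by
  obtain ⟨h₁, h₂, h₃, h₄, P, h₁₃, h₂₄⟩ := h
  exact ⟨h₂, h₃, h₄, h₁, P, h₂₄, openSegment_symm ℝ A₁ A₃ ▸ h₁₃⟩

lemma ConvexQuad.dist_eq_tangentLength_add {A₁ A₂ A₃ A₄ c : Pt} {ρ : ℝ}
    (h : ConvexQuad A₁ A₂ A₃ A₄) (hsub : sphere c ρ ⊆ convexHull ℝ {A₁, A₂, A₃, A₄})
    (htouch : ∃ p, p ∈ sphere c ρ ∩ segment ℝ A₁ A₂) :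
    dist A₁ A₂ = tangentLength c ρ A₁ + tangentLength c ρ A₂ := by
  obtain ⟨h₁, -, -, -, P, h₁₃, h₂₄⟩ := h
  exact dist_eq_tangentLength_add_of_not_collinear (affineIndependent_iff_not_collinear_set.mp h₁)
    h₁₃ h₂₄ hsub htouch

theorem IsTangential.pitot {A₁ A₂ A₃ A₄ : Pt} (hQ : ConvexQuad A₁ A₂ A₃ A₄)
    (h : IsTangential A₁ A₂ A₃ A₄) :
    dist A₁ A₂ + dist A₃ A₄ = dist A₂ A₃ + dist A₄ A₁ := by
  obtain ⟨c, ρ, -, hsub, h₁₂, h₂₃, h₃₄, h₄₁⟩ := h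
  have hrot : ∀ {a b c d : Pt}, ({b, c, d, a} : Set Pt) = {a, b, c, d} := by
    intros; ext; simp only [Set.mem_insert_iff, Set.mem_singleton_iff]; tauto
  have e₁₂ := hQ.dist_eq_tangentLength_add hsub h₁₂.exists
  have e₂₃ := hQ.rotate.dist_eq_tangentLength_add (by rwa [hrot]) h₂₃.exists
  have e₃₄ := hQ.rotate.rotate.dist_eq_tangentLength_add (by rwa [hrot, hrot]) h₃₄.exists
  have e₄₁ := hQ.rotate.rotate.rotate.dist_eq_tangentLength_add (by rwa [hrot, hrot, hrot])
    h₄₁.exists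
  linarith

theorem stmt12 (A₁ A₂ A₃ A₄ : Pt) (hconv : ConvexQuad A₁ A₂ A₃ A₄)
    (htan : IsTangential A₁ A₂ A₃ A₄) (hmdq : IsMidpointDiagonalQuad A₁ A₂ A₃ A₄) :
    -- Q is a kite: two pairs of adjacent sides are equal
    ((dist A₁ A₄ = dist A₁ A₂ ∧ dist A₂ A₃ = dist A₃ A₄) ∨
      (dist A₁ A₂ = dist A₂ A₃ ∧ dist A₁ A₄ = dist A₃ A₄)) ∧
    -- in particular the diagonals are perpendicular
    inner ℝ (A₃ - A₁) (A₄ - A₂) = (0 : ℝ) := by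
  have hpitot := htan.pitot hconv
  obtain ⟨P, h₁₃, h₂₄, hmid | hmid⟩ := hmdq
  · rw [midpoint_comm] at hmid
    have hperp := inner_eq_zero_of_pitot_of_midpoint h₂₄ hmid (by linarith)
    obtain ⟨h₂, h₄⟩ :=
      dist_eq_dist_of_inner_eq_zero_of_midpoint (openSegment_subset_segment _ _ _ h₂₄) hmid hperp
    refine ⟨Or.inr ⟨by rw [h₂, dist_comm], by rw [dist_comm, ← h₄, dist_comm]⟩, ?_⟩
    rwa [← neg_sub A₃ A₁, inner_neg_right, neg_eq_zero, real_inner_comm] at hperp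
  · have hperp := inner_eq_zero_of_pitot_of_midpoint h₁₃ hmid (by linarith)
    obtain ⟨h₁, h₃⟩ :=
      dist_eq_dist_of_inner_eq_zero_of_midpoint (openSegment_subset_segment _ _ _ h₁₃) hmid hperp
    exact ⟨Or.inl ⟨h₁.symm, by rw [dist_comm, h₃]⟩, hperp⟩
end
end

section
/- If a convex quadrilateral Q is both tangential and orthodiagonal (its diagonals are perpendicular), then Q is a midpoint diagonal quadrilateral. -/
noncomputable section

/-!
A side of a tangential quadrilateral with incircle `(c, ρ)` has length `t(A) + t(B)`, where
`t(X) = √(dist X c ^ 2 - ρ ^ 2)` is the tangent length from its endpoint `X`: the incircle lies in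
the half-plane of the side, so the radius to the point of contact is normal to the side and
Pythagoras applies. Summing gives Pitot's relation `a + c = b + d`, while perpendicular diagonals
give `a ^ 2 + c ^ 2 = b ^ 2 + d ^ 2`. Together they force `(a - b) * (a - d) = 0`, so the
quadrilateral is a kite: one diagonal lies on the perpendicular bisector of the other, which it
therefore crosses at its midpoint.
-/

open RealInnerProductSpace

section InnerProductSpace

variable {E : Type*} [NormedAddCommGroup E] [InnerProductSpace ℝ E]

theorem inner_sub_eq_zero_of_sphere_subset_halfSpace {c p n w : E} {ρ : ℝ} (hn : n ≠ 0)
    (hp : p ∈ Metric.sphere c ρ) (hsub : Metric.sphere c ρ ⊆ {x | ⟪n, p⟫ ≤ ⟪n, x⟫})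
    (hw : ⟪n, w⟫ = 0) : ⟪c - p, w⟫ = 0 := by
  have hcp : ‖c - p‖ = ρ := by rw [← dist_eq_norm, Metric.mem_sphere'.mp hp]
  have hn' : 0 < ‖n‖ := norm_pos_iff.mpr hn
  -- the point of the sphere furthest in direction `-n` shows that Cauchy–Schwarz is tight
  have hq : c - (ρ / ‖n‖) • n ∈ Metric.sphere c ρ := by
    rw [Metric.mem_sphere', dist_eq_norm, sub_sub_cancel, norm_smul, Real.norm_eq_abs,
      abs_div, abs_norm, abs_of_nonneg (hcp ▸ norm_nonneg _), div_mul_cancel₀ _ hn'.ne']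
  have hle : ρ * ‖n‖ ≤ ⟪n, c - p⟫ := by
    have : ⟪n, p⟫ ≤ ⟪n, c - (ρ / ‖n‖) • n⟫ := hsub hq
    rw [inner_sub_right, real_inner_smul_right, real_inner_self_eq_norm_sq] at this
    rw [inner_sub_right]
    field_simp at this
    linarith
  have heq : ⟪n, c - p⟫ = ‖n‖ * ‖c - p‖ :=
    le_antisymm (real_inner_le_norm _ _) (by rw [hcp, mul_comm]; exact hle)
  have hpar := inner_eq_norm_mul_iff_real.mp heq
  have : ‖n‖ * ⟪c - p, w⟫ = ‖c - p‖ * ⟪n, w⟫ := by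
    rw [← real_inner_smul_left, ← hpar, real_inner_smul_left]
  rw [hw, mul_zero] at this
  exact (mul_eq_zero.mp this).resolve_left hn'.ne'

theorem sqrt_dist_sq_sub_dist_sq_of_inner_eq_zero {X p c : E} (h : ⟪X - p, c - p⟫ = 0) :
    √(dist X c ^ 2 - dist p c ^ 2) = dist X p := by
  have := norm_sub_sq_eq_norm_sq_add_norm_sq_real h
  rw [sub_sub_sub_cancel_right] at this
  rw [dist_eq_norm X c, dist_eq_norm', dist_eq_norm, sq, sq, this, add_sub_cancel_right,
    Real.sqrt_mul_self (norm_nonneg _)]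

theorem dist_eq_sqrt_add_sqrt_of_inner_eq_zero {A B p c : E} (hp : p ∈ segment ℝ A B)
    (h : ⟪c - p, B - A⟫ = 0) :
    dist A B = √(dist A c ^ 2 - dist p c ^ 2) + √(dist B c ^ 2 - dist p c ^ 2) := by
  rw [← dist_add_dist_of_mem_segment hp]
  obtain ⟨a, b, -, -, hab, rfl⟩ := hp
  obtain rfl : a = 1 - b := eq_sub_of_add_eq hab
  have hA : A - ((1 - b) • A + b • B) = (-b) • (B - A) := by module
  have hB : B - ((1 - b) • A + b • B) = (1 - b) • (B - A) := by module
  rw [sqrt_dist_sq_sub_dist_sq_of_inner_eq_zero, sqrt_dist_sq_sub_dist_sq_of_inner_eq_zero,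
    dist_comm B]
  · rw [hB, real_inner_smul_left, real_inner_comm, h, mul_zero]
  · rw [hA, real_inner_smul_left, real_inner_comm, h, mul_zero]

theorem exists_halfSpace_of_mem_openSegment {A B C D P : E} (hC : C ∉ line[ℝ, A, B])
    (hAC : P ∈ openSegment ℝ A C) (hBD : P ∈ openSegment ℝ B D) :
    ∃ n : E, n ≠ 0 ∧ ⟪n, A⟫ = ⟪n, B⟫ ∧
      convexHull ℝ {A, B, C, D} ⊆ {x | ⟪n, A⟫ ≤ ⟪n, x⟫} := by
  set K := ℝ ∙ (B - A)
  set n := (C - A) - K.starProjection (C - A)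
  have hnK : n ∈ Kᗮ := K.sub_starProjection_mem_orthogonal _
  have hAB : ⟪n, A⟫ = ⟪n, B⟫ := by
    have := Submodule.mem_orthogonal_singleton_iff_inner_right.mp hnK
    rw [real_inner_comm, inner_sub_right, sub_eq_zero] at this
    exact this.symm
  have hn : n ≠ 0 := by
    intro h0
    apply hC
    have : C - A ∈ K := by
      rw [← K.starProjection_eq_self_iff]; exact (sub_eq_zero.mp h0).symm
    obtain ⟨r, hr⟩ := Submodule.mem_span_singleton.mp this
    rw [← vsub_vadd C A]
    exact vadd_left_mem_affineSpan_pair.mpr ⟨r, hr⟩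
  have hnC : ⟪n, A⟫ < ⟪n, C⟫ := by
    have : ⟪n, C - A⟫ = ‖n‖ ^ 2 := by
      rw [← sub_add_cancel (C - A) (K.starProjection (C - A)), inner_add_right,
        Submodule.inner_left_of_mem_orthogonal (K.starProjection_apply_mem _) hnK, add_zero,
        real_inner_self_eq_norm_sq]
    rw [inner_sub_right] at this
    linarith [pow_pos (norm_pos_iff.mpr hn) 2]
  have hnD : ⟪n, A⟫ ≤ ⟪n, D⟫ := by
    obtain ⟨a, b, -, hb, hab, rfl⟩ := hAC
    obtain ⟨a', b', -, hb', hab', hP⟩ := hBD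
    have hPn := congrArg (⟪n, ·⟫) hP
    simp only [inner_add_right, real_inner_smul_right] at hPn
    have : b' * (⟪n, D⟫ - ⟪n, A⟫) = b * (⟪n, C⟫ - ⟪n, A⟫) := by
      linear_combination hPn + ⟪n, A⟫ * (hab - hab') + a' * hAB
    nlinarith [mul_pos hb (sub_pos.mpr hnC)]
  refine ⟨n, hn, hAB, convexHull_min ?_ (convex_halfSpace_ge (innerₛₗ ℝ n).isLinear _)⟩
  rintro x (rfl | rfl | rfl | rfl)
  exacts [le_refl (⟪n, x⟫), hAB.le, hnC.le, hnD]

theorem dist_eq_sqrt_add_sqrt_of_sphere_subset_convexHull {A B C D P c p : E} {ρ : ℝ}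
    (hC : C ∉ line[ℝ, A, B]) (hAC : P ∈ openSegment ℝ A C) (hBD : P ∈ openSegment ℝ B D)
    (hsub : Metric.sphere c ρ ⊆ convexHull ℝ {A, B, C, D})
    (hp : p ∈ Metric.sphere c ρ ∩ segment ℝ A B) :
    dist A B = √(dist A c ^ 2 - ρ ^ 2) + √(dist B c ^ 2 - ρ ^ 2) := by
  obtain ⟨n, hn, hAB, hhull⟩ := exists_halfSpace_of_mem_openSegment hC hAC hBD
  obtain ⟨hpc, hpAB⟩ := hp
  have hnp : ⟪n, p⟫ = ⟪n, A⟫ := by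
    obtain ⟨a, b, -, -, hab, rfl⟩ := hpAB
    rw [inner_add_right, real_inner_smul_right, real_inner_smul_right, ← hAB, ← add_mul, hab,
      one_mul]
  have htangent : ⟪c - p, B - A⟫ = 0 :=
    inner_sub_eq_zero_of_sphere_subset_halfSpace hn hpc (hnp ▸ hsub.trans hhull)
      (by rw [inner_sub_right, hAB, sub_self])
  rw [← Metric.mem_sphere.mp hpc]
  exact dist_eq_sqrt_add_sqrt_of_inner_eq_zero hpAB htangent

theorem dist_sq_add_dist_sq_eq_iff_inner_eq_zero (A₁ A₂ A₃ A₄ : E) :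
    dist A₁ A₂ ^ 2 + dist A₃ A₄ ^ 2 = dist A₂ A₃ ^ 2 + dist A₄ A₁ ^ 2 ↔
      ⟪A₃ - A₁, A₄ - A₂⟫ = 0 := by
  have : dist A₁ A₂ ^ 2 + dist A₃ A₄ ^ 2 - (dist A₂ A₃ ^ 2 + dist A₄ A₁ ^ 2) =
      -2 * ⟪A₃ - A₁, A₄ - A₂⟫ := by
    simp only [dist_eq_norm, ← real_inner_self_eq_norm_sq, inner_sub_left, inner_sub_right]
    linarith [real_inner_comm A₁ A₂, real_inner_comm A₂ A₃, real_inner_comm A₃ A₄,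
      real_inner_comm A₄ A₁, real_inner_comm A₁ A₃, real_inner_comm A₂ A₄]
  constructor <;> intro h <;> linarith

theorem eq_midpoint_of_mem_segment_of_mem_perpBisector {X Y U V P : E}
    (hU : U ∈ AffineSubspace.perpBisector X Y) (hV : V ∈ AffineSubspace.perpBisector X Y)
    (hXY : P ∈ segment ℝ X Y) (hUV : P ∈ segment ℝ U V) : P = midpoint ℝ X Y := by
  have hP : dist X P = dist Y P := AffineSubspace.mem_perpBisector_iff_dist_eq'.mp
    ((AffineSubspace.perpBisector X Y).convex.segment_subset hU hV hUV)
  rw [dist_comm Y P] at hP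
  have hsum := dist_add_dist_of_mem_segment hXY
  exact eq_midpoint_of_dist_eq_half (by linarith) (by linarith)

end InnerProductSpace

theorem AffineIndependent.notMem_affineSpan_pair {k V P : Type*} [DivisionRing k]
    [AddCommGroup V] [Module k V] [AddTorsor V P] {A B C : P}
    (h : AffineIndependent k ![A, B, C]) : C ∉ line[k, A, B] := fun hC ↦
  affineIndependent_iff_not_collinear_set.mp h <| by
    rw [Set.pair_comm, Set.insert_comm]
    exact collinear_insert_of_mem_affineSpan_pair hC

theorem eq_and_eq_or_eq_and_eq_of_add_eq_add_of_sq_add_sq_eq {a b c d : ℝ} (h₁ : a + c = b + d)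
    (h₂ : a ^ 2 + c ^ 2 = b ^ 2 + d ^ 2) : (a = b ∧ c = d) ∨ (a = d ∧ c = b) := by
  obtain rfl : c = b + d - a := by linarith
  have : (a - b) * (a - d) = 0 := by linear_combination h₂ / 2
  rcases mul_eq_zero.mp this with h | h
  · exact Or.inl ⟨by linarith, by linarith⟩
  · exact Or.inr ⟨by linarith, by linarith⟩

theorem IsTangential.dist_add_dist_eq {A₁ A₂ A₃ A₄ : Pt} (htan : IsTangential A₁ A₂ A₃ A₄)
    (hconv : ConvexQuad A₁ A₂ A₃ A₄) :
    dist A₁ A₂ + dist A₃ A₄ = dist A₂ A₃ + dist A₄ A₁ := by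
  obtain ⟨h₁₂₃, h₂₃₄, h₃₄₁, h₄₁₂, P, hP₁₃, hP₂₄⟩ := hconv
  obtain ⟨c, ρ, -, hsub, ⟨p₁₂, hp₁₂, -⟩, ⟨p₂₃, hp₂₃, -⟩, ⟨p₃₄, hp₃₄, -⟩, ⟨p₄₁, hp₄₁, -⟩⟩ := htan
  have hP₃₁ : P ∈ openSegment ℝ A₃ A₁ := openSegment_symm ℝ A₁ A₃ ▸ hP₁₃
  have hP₄₂ : P ∈ openSegment ℝ A₄ A₂ := openSegment_symm ℝ A₂ A₄ ▸ hP₂₄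
  have hrotate (a b c d : Pt) : ({a, b, c, d} : Set Pt) = {b, c, d, a} := by
    rw [Set.insert_comm a b, Set.insert_comm a c, Set.pair_comm a d]
  have hsub₂ := hrotate A₁ A₂ A₃ A₄ ▸ hsub
  have hsub₃ := hrotate A₂ A₃ A₄ A₁ ▸ hsub₂
  have hsub₄ := hrotate A₃ A₄ A₁ A₂ ▸ hsub₃
  rw [dist_eq_sqrt_add_sqrt_of_sphere_subset_convexHull h₁₂₃.notMem_affineSpan_pair hP₁₃ hP₂₄
      hsub hp₁₂,
    dist_eq_sqrt_add_sqrt_of_sphere_subset_convexHull h₂₃₄.notMem_affineSpan_pair hP₂₄ hP₃₁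
      hsub₂ hp₂₃,
    dist_eq_sqrt_add_sqrt_of_sphere_subset_convexHull h₃₄₁.notMem_affineSpan_pair hP₃₁ hP₄₂
      hsub₃ hp₃₄,
    dist_eq_sqrt_add_sqrt_of_sphere_subset_convexHull h₄₁₂.notMem_affineSpan_pair hP₄₂ hP₁₃
      hsub₄ hp₄₁]
  ring

theorem stmt13 (A₁ A₂ A₃ A₄ : Pt) (hconv : ConvexQuad A₁ A₂ A₃ A₄)
    (htan : IsTangential A₁ A₂ A₃ A₄)
    (horth : inner ℝ (A₃ - A₁) (A₄ - A₂) = (0 : ℝ)) :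
    IsMidpointDiagonalQuad A₁ A₂ A₃ A₄ := by
  have hpitot := htan.dist_add_dist_eq hconv
  have hsq := (dist_sq_add_dist_sq_eq_iff_inner_eq_zero A₁ A₂ A₃ A₄).mpr horth
  obtain ⟨-, -, -, -, P, hP₁₃, hP₂₄⟩ := hconv
  have hP₁₃' := openSegment_subset_segment ℝ A₁ A₃ hP₁₃
  have hP₂₄' := openSegment_subset_segment ℝ A₂ A₄ hP₂₄
  refine ⟨P, hP₁₃, hP₂₄, ?_⟩
  rcases eq_and_eq_or_eq_and_eq_of_add_eq_add_of_sq_add_sq_eq hpitot hsq with ⟨h₁, h₂⟩ | ⟨h₁, h₂⟩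
  · refine Or.inl (eq_midpoint_of_mem_segment_of_mem_perpBisector ?_ ?_ hP₁₃' hP₂₄')
    · rw [AffineSubspace.mem_perpBisector_iff_dist_eq, dist_comm, h₁]
    · rw [AffineSubspace.mem_perpBisector_iff_dist_eq, ← h₂, dist_comm]
  · refine Or.inr (eq_midpoint_of_mem_segment_of_mem_perpBisector ?_ ?_ hP₂₄' hP₁₃')
    · rw [AffineSubspace.mem_perpBisector_iff_dist_eq, h₁, dist_comm]
    · rw [AffineSubspace.mem_perpBisector_iff_dist_eq, dist_comm, ← h₂, dist_comm]
end
end
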